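/- arXiv:2305.02165 — 2 statements merged into one kernel-verified Lean document; each statement's English description precedes it below -/
import Mathlib

section
/- Linearized generic rate: suppose iterates satisfy P(z^k - z^{k+1}) = F^{k+1} for PSD matrix P, where for each k and all z = (x, λ): L(x^{k+1}, λ) - L(x, λ^{k+1}) ≤ ⟨F^{k+1}, z^{k+1} - z⟩ + (1/2)‖z^k - z^{k+1}‖²_E for some PSD matrix E with P ⪰ E. Then the ergodic averages satisfy L(x̄^k, λ) - L(x, λ̄^k) ≤ ‖z - z^0‖²_P / (2k). -/
/-!
Since `P(z^k - z^{k+1}) = F^{k+1}`, the inner product in the gap condition is the cross term of the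
three-point identity for the symmetric form `‖·‖²_P`; it splits into `½‖z - z^k‖²_P - ½‖z - z^{k+1}‖²_P`
minus `½‖z^k - z^{k+1}‖²_P`, and the last term absorbs the error `½‖z^k - z^{k+1}‖²_E` because `P ⪰ E`.
Summing, the gaps telescope to at most `½‖z - z^0‖²_P`, and Jensen's inequality in each variable of
the convex-concave `L` bounds the gap at the ergodic averages by the average gap.
-/

open Matrix Finset

namespace Matrix

variable {ι R : Type*} [Fintype ι]

lemma IsSymm.dotProduct_mulVec_comm [CommSemiring R] {P : Matrix ι ι R} (hP : P.IsSymm)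
    (u v : ι → R) : u ⬝ᵥ (P *ᵥ v) = v ⬝ᵥ (P *ᵥ u) := by
  rw [dotProduct_mulVec, ← mulVec_transpose, hP.eq, dotProduct_comm]

lemma IsSymm.two_mul_mulVec_sub_dotProduct_sub [CommRing R] {P : Matrix ι ι R} (hP : P.IsSymm)
    (a b c : ι → R) :
    2 * ((P *ᵥ (a - b)) ⬝ᵥ (b - c))
      = (c - a) ⬝ᵥ (P *ᵥ (c - a)) - (c - b) ⬝ᵥ (P *ᵥ (c - b)) - (a - b) ⬝ᵥ (P *ᵥ (a - b)) := by
  have hab := hP.dotProduct_mulVec_comm a b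
  have hac := hP.dotProduct_mulVec_comm a c
  have hbc := hP.dotProduct_mulVec_comm b c
  simp only [mulVec_sub, dotProduct_sub, sub_dotProduct, dotProduct_comm (P *ᵥ _)]
  linear_combination hac - hab - hbc

lemma le_sub_of_le_proximal_step {P E : Matrix ι ι ℝ} (hP : P.IsSymm) (hPE : (P - E).PosSemidef)
    {g : ℝ} {u v z : ι → ℝ}
    (h : g ≤ (P *ᵥ (u - v)) ⬝ᵥ (v - z) + 1 / 2 * ((u - v) ⬝ᵥ (E *ᵥ (u - v)))) :
    g ≤ 1 / 2 * ((z - u) ⬝ᵥ (P *ᵥ (z - u))) - 1 / 2 * ((z - v) ⬝ᵥ (P *ᵥ (z - v))) := by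
  have hthree := hP.two_mul_mulVec_sub_dotProduct_sub u v z
  have hdom : 0 ≤ (u - v) ⬝ᵥ (P *ᵥ (u - v)) - (u - v) ⬝ᵥ (E *ᵥ (u - v)) := by
    simpa [sub_mulVec, dotProduct_sub] using hPE.dotProduct_mulVec_nonneg (u - v)
  linarith

end Matrix

lemma Finset.sum_range_le_of_le_sub_succ {α : Type*} [AddCommGroup α] [PartialOrder α]
    [IsOrderedAddMonoid α] {g φ : ℕ → α} (hg : ∀ i, g i ≤ φ i - φ (i + 1)) {k : ℕ}
    (hφ : 0 ≤ φ k) : ∑ i ∈ range k, g i ≤ φ 0 :=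
  calc ∑ i ∈ range k, g i ≤ ∑ i ∈ range k, (φ i - φ (i + 1)) := sum_le_sum fun i _ => hg i
    _ = φ 0 - φ k := sum_range_sub' φ k
    _ ≤ φ 0 := sub_le_self _ hφ

lemma sub_map_sum_le_sum_mul_sub {E F ι : Type*} [AddCommGroup E] [Module ℝ E] [AddCommGroup F]
    [Module ℝ F] {L : E → F → ℝ} (hcvx : ∀ y, ConvexOn ℝ Set.univ (L · y))
    (hccv : ∀ x, ConcaveOn ℝ Set.univ (L x ·)) {s : Finset ι} {w : ι → ℝ}
    (hw₀ : ∀ i ∈ s, 0 ≤ w i) (hw₁ : ∑ i ∈ s, w i = 1) (xs : ι → E) (ys : ι → F) (x : E) (y : F) :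
    L (∑ i ∈ s, w i • xs i) y - L x (∑ i ∈ s, w i • ys i)
      ≤ ∑ i ∈ s, w i * (L (xs i) y - L x (ys i)) := by
  have hx := (hcvx y).map_sum_le hw₀ hw₁ fun i _ => Set.mem_univ (xs i)
  have hy := (hccv x).le_map_sum hw₀ hw₁ fun i _ => Set.mem_univ (ys i)
  simp only [smul_eq_mul] at hx hy
  simp only [mul_sub, sum_sub_distrib]
  linarith

theorem ergodic_rate_linearized_general {n m : ℕ} (L : (Fin n → ℝ) → (Fin m → ℝ) → ℝ)
    (hcvx : ∀ lam, ConvexOn ℝ Set.univ (fun x => L x lam))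
    (hccv : ∀ x, ConcaveOn ℝ Set.univ (fun lam => L x lam))
    (P E : Matrix (Fin n ⊕ Fin m) (Fin n ⊕ Fin m) ℝ)
    (hP : P.PosSemidef) (hPE : (P - E).PosSemidef)
    (xs : ℕ → Fin n → ℝ) (ls : ℕ → Fin m → ℝ) (F : ℕ → Fin n ⊕ Fin m → ℝ)
    (hupdate : ∀ k, P *ᵥ (Sum.elim (xs k) (ls k) - Sum.elim (xs (k+1)) (ls (k+1)))
      = F (k+1))
    (hgap : ∀ k (x : Fin n → ℝ) (lam : Fin m → ℝ),
      L (xs (k+1)) lam - L x (ls (k+1))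
        ≤ F (k+1) ⬝ᵥ (Sum.elim (xs (k+1)) (ls (k+1)) - Sum.elim x lam)
          + (1/2) * ((Sum.elim (xs k) (ls k) - Sum.elim (xs (k+1)) (ls (k+1)))
              ⬝ᵥ (E *ᵥ (Sum.elim (xs k) (ls k) - Sum.elim (xs (k+1)) (ls (k+1))))))
    (k : ℕ) (hk : 1 ≤ k) (x : Fin n → ℝ) (lam : Fin m → ℝ) :
    L ((k : ℝ)⁻¹ • ∑ i ∈ range k, xs (i+1)) lam
      - L x ((k : ℝ)⁻¹ • ∑ i ∈ range k, ls (i+1))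
      ≤ ((Sum.elim x lam - Sum.elim (xs 0) (ls 0))
          ⬝ᵥ (P *ᵥ (Sum.elim x lam - Sum.elim (xs 0) (ls 0)))) / (2 * k) := by
  set halfDistSq : ℕ → ℝ := fun i => 1 / 2 * ((Sum.elim x lam - Sum.elim (xs i) (ls i))
    ⬝ᵥ (P *ᵥ (Sum.elim x lam - Sum.elim (xs i) (ls i))))
  have hstep : ∀ i, L (xs (i+1)) lam - L x (ls (i+1)) ≤ halfDistSq i - halfDistSq (i + 1) :=
    fun i => le_sub_of_le_proximal_step (isHermitian_iff_isSymm.mp hP.isHermitian) hPE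
      (hupdate i ▸ hgap i x lam)
  have hsum := sum_range_le_of_le_sub_succ hstep (k := k)
    (mul_nonneg (by norm_num) (by simpa only [star_trivial] using hP.dotProduct_mulVec_nonneg _))
  have hkpos : (0 : ℝ) < k := by exact_mod_cast hk
  calc L ((k : ℝ)⁻¹ • ∑ i ∈ range k, xs (i+1)) lam - L x ((k : ℝ)⁻¹ • ∑ i ∈ range k, ls (i+1))
      ≤ ∑ i ∈ range k, (k : ℝ)⁻¹ * (L (xs (i+1)) lam - L x (ls (i+1))) := by
        rw [smul_sum, smul_sum]
        exact sub_map_sum_le_sum_mul_sub hcvx hccv (fun _ _ => by positivity)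
          (by simp [hkpos.ne']) _ _ x lam
    _ = (k : ℝ)⁻¹ * ∑ i ∈ range k, (L (xs (i+1)) lam - L x (ls (i+1))) := (mul_sum ..).symm
    _ ≤ (k : ℝ)⁻¹ * halfDistSq 0 := by gcongr
    _ = _ := by simp only [halfDistSq]; field_simp

/-- `O(1/k)` ergodic rate of the linearized generic update `P(z^k - z^{k+1}) = F^{k+1}`
under the approximation condition with an error matrix `E ⪯ P`. -/
theorem ergodic_rate_linearized {n m : ℕ} (L : (Fin n → ℝ) → (Fin m → ℝ) → ℝ)
    (hcvx : ∀ lam, ConvexOn ℝ Set.univ (fun x => L x lam))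
    (hccv : ∀ x, ConcaveOn ℝ Set.univ (fun lam => L x lam))
    (P E : Matrix (Fin n ⊕ Fin m) (Fin n ⊕ Fin m) ℝ)
    (hP : P.PosSemidef) (hE : E.PosSemidef) (hPE : (P - E).PosSemidef)
    (xs : ℕ → Fin n → ℝ) (ls : ℕ → Fin m → ℝ) (F : ℕ → Fin n ⊕ Fin m → ℝ)
    (hupdate : ∀ k, P *ᵥ (Sum.elim (xs k) (ls k) - Sum.elim (xs (k+1)) (ls (k+1)))
      = F (k+1))
    (hgap : ∀ k (x : Fin n → ℝ) (lam : Fin m → ℝ),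
      L (xs (k+1)) lam - L x (ls (k+1))
        ≤ F (k+1) ⬝ᵥ (Sum.elim (xs (k+1)) (ls (k+1)) - Sum.elim x lam)
          + (1/2) * ((Sum.elim (xs k) (ls k) - Sum.elim (xs (k+1)) (ls (k+1)))
              ⬝ᵥ (E *ᵥ (Sum.elim (xs k) (ls k) - Sum.elim (xs (k+1)) (ls (k+1))))))
    (k : ℕ) (hk : 1 ≤ k) (x : Fin n → ℝ) (lam : Fin m → ℝ) :
    L ((k : ℝ)⁻¹ • ∑ i ∈ range k, xs (i+1)) lam
      - L x ((k : ℝ)⁻¹ • ∑ i ∈ range k, ls (i+1))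
      ≤ ((Sum.elim x lam - Sum.elim (xs 0) (ls 0))
          ⬝ᵥ (P *ᵥ (Sum.elim x lam - Sum.elim (xs 0) (ls 0)))) / (2 * k) :=
  ergodic_rate_linearized_general L hcvx hccv P E hP hPE xs ls F hupdate hgap k hk x lam
end

section
/- One-step inexact inequality: if P(z^k - z^{k+1}) + ε^{k+1} ∈ F(z^{k+1}) with P PSD, L convex-concave, and ‖z^{k+1} - z‖₂ ≤ D, then L(x^{k+1}, λ) - L(x, λ^{k+1}) ≤ (1/2)‖z^k - z‖²_P - (1/2)‖z^{k+1} - z‖²_P + D‖ε^{k+1}‖₂. -/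
open Matrix

/-- `g` is a subgradient of `f` at `x`. -/
def IsSubgradAt {ι : Type*} [Fintype ι] (f : (ι → ℝ) → ℝ) (x g : ι → ℝ) : Prop :=
  ∀ y, f x + g ⬝ᵥ (y - x) ≤ f y

/-- Euclidean norm of a vector. -/
noncomputable def evnorm {ι : Type*} [Fintype ι] (u : ι → ℝ) : ℝ := Real.sqrt (u ⬝ᵥ u)

/-!
Adding the subgradient inequalities in `x` and in `λ` at `z^{k+1}` bounds the gap
`L(x^{k+1}, λ) - L(x, λ^{k+1})` by `⟨g, z^{k+1} - z⟩` with `g = P(z^k - z^{k+1}) + ε^{k+1}`.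
For symmetric `P` the three-point identity
`2⟨P(a - b), b - c⟩ = ‖a - c‖²_P - ‖b - c‖²_P - ‖a - b‖²_P`
turns the `P`-part into a telescoping difference minus a nonnegative term, and Cauchy–Schwarz
bounds the `ε`-part by `D‖ε^{k+1}‖₂`.
-/

section Euclidean

variable {ι : Type*} [Fintype ι]

lemma evnorm_nonneg (u : ι → ℝ) : 0 ≤ evnorm u :=
  Real.sqrt_nonneg _

lemma dotProduct_le_evnorm_mul_evnorm (u v : ι → ℝ) : u ⬝ᵥ v ≤ evnorm u * evnorm v := by
  simpa [evnorm, dotProduct, sq] using Real.sum_mul_le_sqrt_mul_sqrt Finset.univ u v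

lemma dotProduct_le_mul_evnorm {u v : ι → ℝ} {D : ℝ} (hv : evnorm v ≤ D) :
    u ⬝ᵥ v ≤ D * evnorm u :=
  calc u ⬝ᵥ v ≤ evnorm u * evnorm v := dotProduct_le_evnorm_mul_evnorm u v
    _ ≤ evnorm u * D := mul_le_mul_of_nonneg_left hv (evnorm_nonneg u)
    _ = D * evnorm u := mul_comm _ _

end Euclidean

section ThreePoint

variable {ι : Type*} [Fintype ι] {P : Matrix ι ι ℝ}

lemma Matrix.IsHermitian.mulVec_dotProduct_comm (hP : P.IsHermitian) (u w : ι → ℝ) :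
    (P *ᵥ u) ⬝ᵥ w = u ⬝ᵥ (P *ᵥ w) := by
  have hPt : Pᵀ = P := by rw [← conjTranspose_eq_transpose_of_trivial, hP.eq]
  rw [dotProduct_comm, dotProduct_mulVec, ← mulVec_transpose, hPt, dotProduct_comm]

lemma Matrix.IsHermitian.mulVec_sub_dotProduct_sub (hP : P.IsHermitian) (a b c : ι → ℝ) :
    (P *ᵥ (a - b)) ⬝ᵥ (b - c)
      = (1/2) * ((a - c) ⬝ᵥ (P *ᵥ (a - c))) - (1/2) * ((b - c) ⬝ᵥ (P *ᵥ (b - c)))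
        - (1/2) * ((a - b) ⬝ᵥ (P *ᵥ (a - b))) := by
  rw [show a - b = (a - c) - (b - c) by abel]
  generalize a - c = u
  generalize b - c = v
  have hcross : v ⬝ᵥ (P *ᵥ u) = u ⬝ᵥ (P *ᵥ v) := by
    rw [← hP.mulVec_dotProduct_comm, dotProduct_comm]
  simp only [mulVec_sub, dotProduct_sub, sub_dotProduct, hcross, hP.mulVec_dotProduct_comm]
  ring

lemma Matrix.PosSemidef.mulVec_sub_dotProduct_sub_le (hP : P.PosSemidef) (a b c : ι → ℝ) :
    (P *ᵥ (a - b)) ⬝ᵥ (b - c)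
      ≤ (1/2) * ((a - c) ⬝ᵥ (P *ᵥ (a - c))) - (1/2) * ((b - c) ⬝ᵥ (P *ᵥ (b - c))) := by
  rw [hP.isHermitian.mulVec_sub_dotProduct_sub]
  have hnonneg := hP.dotProduct_mulVec_nonneg (a - b)
  rw [star_trivial] at hnonneg
  linarith

end ThreePoint

lemma sub_le_dotProduct_of_isSubgradAt {ι κ : Type*} [Fintype ι] [Fintype κ]
    (L : (ι → ℝ) → (κ → ℝ) → ℝ) {x' : ι → ℝ} {l' : κ → ℝ} {gx : ι → ℝ} {gl : κ → ℝ}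
    (hgx : IsSubgradAt (fun x => L x l') x' gx) (hgl : IsSubgradAt (fun l => -L x' l) l' gl)
    (x : ι → ℝ) (lam : κ → ℝ) :
    L x' lam - L x l' ≤ Sum.elim gx gl ⬝ᵥ (Sum.elim x' l' - Sum.elim x lam) := by
  have hx := hgx x
  have hl := hgl lam
  rw [← Sum.elim_sub_sub, sumElim_dotProduct_sumElim, ← neg_sub x x', ← neg_sub lam l',
    dotProduct_neg, dotProduct_neg]
  beta_reduce at hx hl
  linarith

/-- One-step inequality for the inexact update `P(z^k - z^{k+1}) + ε^{k+1} ∈ F(z^{k+1})`: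
`L(x^{k+1},λ) - L(x,λ^{k+1}) ≤ ½‖z^k-z‖²_P - ½‖z^{k+1}-z‖²_P + D‖ε^{k+1}‖₂`. -/
theorem one_step_inexact {n m : ℕ} (L : (Fin n → ℝ) → (Fin m → ℝ) → ℝ)
    (P : Matrix (Fin n ⊕ Fin m) (Fin n ⊕ Fin m) ℝ) (hP : P.PosSemidef)
    (xk xk1 : Fin n → ℝ) (lk lk1 : Fin m → ℝ) (eps : Fin n ⊕ Fin m → ℝ)
    (gx : Fin n → ℝ) (gl : Fin m → ℝ)
    (hgx : IsSubgradAt (fun x => L x lk1) xk1 gx)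
    (hgl : IsSubgradAt (fun l => -L xk1 l) lk1 gl)
    (hinc : P *ᵥ (Sum.elim xk lk - Sum.elim xk1 lk1) + eps = Sum.elim gx gl)
    (x : Fin n → ℝ) (lam : Fin m → ℝ) (D : ℝ)
    (hD : evnorm (Sum.elim xk1 lk1 - Sum.elim x lam) ≤ D) :
    L xk1 lam - L x lk1
      ≤ (1/2) * ((Sum.elim xk lk - Sum.elim x lam)
            ⬝ᵥ (P *ᵥ (Sum.elim xk lk - Sum.elim x lam)))
        - (1/2) * ((Sum.elim xk1 lk1 - Sum.elim x lam)
            ⬝ᵥ (P *ᵥ (Sum.elim xk1 lk1 - Sum.elim x lam)))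
        + D * evnorm eps :=
  calc L xk1 lam - L x lk1
      ≤ Sum.elim gx gl ⬝ᵥ (Sum.elim xk1 lk1 - Sum.elim x lam) :=
        sub_le_dotProduct_of_isSubgradAt L hgx hgl x lam
    _ = (P *ᵥ (Sum.elim xk lk - Sum.elim xk1 lk1)) ⬝ᵥ (Sum.elim xk1 lk1 - Sum.elim x lam)
        + eps ⬝ᵥ (Sum.elim xk1 lk1 - Sum.elim x lam) := by rw [← hinc, add_dotProduct]
    _ ≤ _ := add_le_add (hP.mulVec_sub_dotProduct_sub_le _ _ _) (dotProduct_le_mul_evnorm hD)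
end
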